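/- Let q ≥ 2 and k ≥ 2 be integers and let I be a maximization instance of k CSP-q with opt(I) ≠ wor(I) in which every constraint function P_i belongs to E_q, and which admits a strong coloring with ν colors, where ν ≥ k. Suppose there exists a difference scheme D_k(R, ν, q) M and a word v ∈ Σ_q^ν such that the total number of rows of M lying in {v + a·𝟏 : a ∈ Σ_q} equals R* > 0. Then the average differential ratio of I is at least R*/R; equivalently, E[v(I,X)] ≥ (R*/R)·opt(I) + (1 − R*/R)·wor(I). -/

import Mathlib

/-! Fix an optimal solution `x*` and a strong coloring `c`, and let row `r` of the difference
scheme give the solution `x_r = x* - v ∘ c + M_r ∘ c`. The colors on the support of a constraint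
are distinct, so by the difference-scheme property the restrictions of the rows to these colors
are, up to uniform shifts, equidistributed; as the constraint functions are shift invariant, the
`R` solutions `x_r` average exactly to `E[v(I,X)]`. The `R*` rows of the form `v + a·𝟏` give the
optimal shifts `x* + a·𝟏`, and all other rows are worth at least `wor(I)`. -/

/-- An instance of the (maximization) problem `k CSP-q` with `n` variables:
`m` weighted constraints, where constraint `i` has positive weight `w i`,
arity `arity i ≤ k`, a strictly increasing tuple `idx i` of indices of the
variables it depends on, and a constraint function `P i : Σ_q^{arity i} → ℝ`. -/
structure CSPInstance (q k n : ℕ) where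
  m : ℕ
  w : Fin m → ℝ
  w_pos : ∀ i, 0 < w i
  arity : Fin m → ℕ
  arity_le : ∀ i, arity i ≤ k
  idx : (i : Fin m) → Fin (arity i) → Fin n
  idx_mono : ∀ i, StrictMono (idx i)
  P : (i : Fin m) → ((Fin (arity i) → Fin q) → ℝ)

namespace CSPInstance

variable {q k n : ℕ}

/-- The objective value `v(I, x)` of a solution `x ∈ Σ_q^n`. -/
def value (I : CSPInstance q k n) (x : Fin n → Fin q) : ℝ :=
  ∑ i : Fin I.m, I.w i * I.P i (fun s => x (I.idx i s))

/-- `opt(I)`, the best (maximum) objective value. -/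
noncomputable def opt (I : CSPInstance q k n) : ℝ := sSup (Set.range I.value)

/-- `wor(I)`, the worst (minimum) objective value. -/
noncomputable def wor (I : CSPInstance q k n) : ℝ := sInf (Set.range I.value)

/-- `E[v(I,X)]`, the average objective value over all `q^n` solutions. -/
noncomputable def avg (I : CSPInstance q k n) : ℝ :=
  (∑ x : Fin n → Fin q, I.value x) / (q : ℝ) ^ n

/-- A strong coloring of `I` with `ν` colors: an assignment of colors to variables such
that the support of each constraint meets each color class in at most one index. -/
def StrongColoring (I : CSPInstance q k n) (ν : ℕ) : Prop :=
  ∃ c : Fin n → Fin ν, ∀ i : Fin I.m, Function.Injective (fun s => c (I.idx i s))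

end CSPInstance

/-- A function `P : Σ_q^κ → ℝ` belongs to the family `E_q` if it is invariant under a
uniform shift of all its inputs (addition is componentwise mod `q`). -/
def MemE (q : ℕ) {κ : ℕ} (P : (Fin κ → Fin q) → ℝ) : Prop :=
  ∀ (y : Fin κ → Fin q) (a : Fin q), P (fun s => y s + a) = P y

/-- `M` is a difference scheme `D_t(R, ν, q)` based on `(ℤ_q, +)`: for every `t` pairwise
distinct columns `c 0 < ... < c (t-1)` and every word `v ∈ Σ_q^t`, exactly `R / q^(t-1)` rows
of `M` restrict on these columns to a word of the form `v + a·𝟏`, `a ∈ Σ_q`. -/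
def IsDS (R ν q t : ℕ) (M : Fin R → Fin ν → Fin q) : Prop :=
  ∀ c : Fin t → Fin ν, StrictMono c → ∀ v : Fin t → Fin q,
    (Finset.univ.filter fun r => ∃ a : Fin q, ∀ s, M r (c s) = v s + a).card * q ^ (t - 1) = R

open Finset

theorem pow_card_nsmul_sum_comp_of_injective {α β γ M : Type*} [Fintype α] [Fintype β]
    [Fintype γ] [DecidableEq α] [DecidableEq β] [AddCommMonoid M] {ι : α → β}
    (hι : Function.Injective ι) (f : (α → γ) → M) :
    (Fintype.card γ ^ Fintype.card α) • ∑ z : β → γ, f (z ∘ ι)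
      = (Fintype.card γ ^ Fintype.card β) • ∑ y : α → γ, f y := by
  classical
  let split := Equiv.piEquivPiSubtypeProd (· ∈ Set.range ι) (fun _ => γ)
  let onRange := (Equiv.ofInjective ι hι).arrowCongr (Equiv.refl γ)
  have hsum : ∑ z : β → γ, f (z ∘ ι)
      = Fintype.card ({b // b ∉ Set.range ι} → γ) • ∑ y : α → γ, f y := by
    rw [← split.symm.sum_comp, Fintype.sum_prod_type, ← onRange.sum_comp, sum_comm]
    have hrestrict : ∀ x y, split.symm (onRange x, y) ∘ ι = x := fun x y => funext fun a => by
      simp only [split, onRange, Function.comp_apply, Equiv.piEquivPiSubtypeProd_symm_apply,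
        Set.mem_range_self, dite_true, Equiv.arrowCongr_apply, Equiv.coe_refl, id,
        Equiv.ofInjective_symm_apply]
    simp only [hrestrict, sum_const, card_univ]
  have hcard : Fintype.card γ ^ Fintype.card α * Fintype.card ({b // b ∉ Set.range ι} → γ)
      = Fintype.card γ ^ Fintype.card β := by
    rw [Fintype.card_fun, Fintype.card_subtype_compl, Set.card_range_of_injective hι, ← pow_add,
      Nat.add_sub_cancel' (Fintype.card_le_of_injective ι hι)]
  rw [hsum, smul_smul, hcard]

section DifferenceScheme

variable {R ν q t : ℕ} {M : Fin R → Fin ν → Fin q}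

theorem IsDS.card_filter_mul_of_injective (hDS : IsDS R ν q t M) {e : Fin t → Fin ν}
    (he : Function.Injective e) (w : Fin t → Fin q) :
    #{r | ∃ a : Fin q, ∀ s, M r (e s) = w s + a} * q ^ (t - 1) = R := by
  let σ := Tuple.sort e
  have hmono : StrictMono (e ∘ σ) :=
    (Tuple.monotone_sort e).strictMono_of_injective (he.comp σ.injective)
  convert hDS (e ∘ σ) hmono (w ∘ σ) using 4 with r
  exact ⟨fun ⟨a, ha⟩ => ⟨a, fun s => ha (σ s)⟩,
    fun ⟨a, ha⟩ => ⟨a, fun s => by simpa using ha (σ.symm s)⟩⟩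

theorem IsDS.pow_mul_sum_comp_eq [NeZero q] (hDS : IsDS R ν q t M) (ht : 0 < t)
    {e : Fin t → Fin ν} (he : Function.Injective e) {f : (Fin t → Fin q) → ℝ}
    (hf : MemE q f) :
    (q : ℝ) ^ t * ∑ r, f (fun s => M r (e s)) = R * ∑ w, f w := by
  let shifts (w : Fin t → Fin q) : Finset (Fin R × Fin q) :=
    {p | ∀ s, M p.1 (e s) = w s + p.2}
  -- a row lies in the shift class of `w` for at most one shift, as `t > 0`
  have hcard (w : Fin t → Fin q) :
      #(shifts w) = #{r | ∃ a : Fin q, ∀ s, M r (e s) = w s + a} := by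
    refine card_nbij Prod.fst (fun p hp => ?_) (fun p hp p' hp' hpp => ?_) (fun r hr => ?_)
    · simp only [shifts, coe_filter, mem_univ, true_and, Set.mem_ofPred_eq] at hp ⊢
      exact ⟨p.2, hp⟩
    · simp only [shifts, coe_filter, mem_univ, true_and, Set.mem_ofPred_eq] at hp hp'
      have h0 := (hp ⟨0, ht⟩).symm.trans (hpp ▸ hp' ⟨0, ht⟩)
      exact Prod.ext hpp (add_left_cancel h0)
    · simp only [coe_filter, mem_univ, true_and, Set.mem_ofPred_eq] at hr
      obtain ⟨a, ha⟩ := hr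
      exact ⟨(r, a), by simpa [shifts] using ha, rfl⟩
  have hshift (x : Fin t → Fin q) (a : Fin q) : f (fun s => x s - a) = f x := by
    simpa using (hf (fun s => x s - a) a).symm
  have hdouble : (q : ℝ) * ∑ r, f (fun s => M r (e s)) = ∑ w, #(shifts w) * f w := by
    calc (q : ℝ) * ∑ r, f (fun s => M r (e s))
        = ∑ p : Fin R × Fin q, f (fun s => M p.1 (e s) - p.2) := by
          simp [hshift, Fintype.sum_prod_type, mul_sum]
      _ = ∑ w, #(shifts w) * f w := by
          rw [← sum_fiberwise' univ (fun p : Fin R × Fin q => fun s => M p.1 (e s) - p.2) f]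
          refine sum_congr rfl fun w _ => ?_
          rw [sum_const, nsmul_eq_mul]
          congr 3
          ext p
          simp [shifts, funext_iff, sub_eq_iff_eq_add]
  calc (q : ℝ) ^ t * ∑ r, f (fun s => M r (e s))
      = (q : ℝ) ^ (t - 1) * ((q : ℝ) * ∑ r, f (fun s => M r (e s))) := by
        rw [← mul_assoc, ← pow_succ, Nat.sub_add_cancel ht]
    _ = R * ∑ w, f w := by
        rw [hdouble, mul_sum, mul_sum]
        refine sum_congr rfl fun w _ => ?_
        have hR := congrArg (Nat.cast : ℕ → ℝ) (hDS.card_filter_mul_of_injective he w)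
        push_cast at hR
        rw [← hcard] at hR
        rw [← hR]
        ring

theorem MemE.comp_add_left [NeZero q] {κ : ℕ} {P : (Fin κ → Fin q) → ℝ} (hP : MemE q P)
    (u : Fin κ → Fin q) : MemE q (fun y => P (fun s => u s + y s)) := fun y a => by
  simpa only [add_assoc] using hP (fun s => u s + y s) a

theorem IsDS.pow_mul_sum_comp_eq_of_le [NeZero q] (hDS : IsDS R ν q t M) (ht : 0 < t)
    (htν : t ≤ ν) {κ : ℕ} (hκ : κ ≤ t) {d : Fin κ → Fin ν} (hd : Function.Injective d)
    {P : (Fin κ → Fin q) → ℝ} (hP : MemE q P) :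
    (q : ℝ) ^ κ * ∑ r, P (fun s => M r (d s)) = R * ∑ y, P y := by
  -- extend `d` to `t` distinct columns and regard `P` as a function of `t` arguments
  obtain ⟨σ, hσ⟩ := Equiv.Perm.exists_extending_pair (Fin.castLE (hκ.trans htν)) d
    (Fin.castLE_injective _) hd
  have hext (s : Fin κ) : σ (Fin.castLE htν (Fin.castLE hκ s)) = d s := by
    rw [Fin.castLE_castLE, hσ]
  have hPadded : MemE q (fun z : Fin t → Fin q => P (z ∘ Fin.castLE hκ)) :=
    fun z a => hP (z ∘ Fin.castLE hκ) a
  have hsum := hDS.pow_mul_sum_comp_eq ht (σ.injective.comp (Fin.castLE_injective htν)) hPadded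
  have hmarginal := pow_card_nsmul_sum_comp_of_injective (γ := Fin q) (Fin.castLE_injective hκ) P
  simp only [Fintype.card_fin, nsmul_eq_mul, Nat.cast_pow] at hmarginal
  simp only [Function.comp_def, hext] at hsum hmarginal
  have hq : (q : ℝ) ^ t ≠ 0 := pow_ne_zero _ (Nat.cast_ne_zero.mpr (NeZero.ne q))
  apply mul_left_cancel₀ hq
  linear_combination (q : ℝ) ^ κ * hsum + R * hmarginal

theorem IsDS.pow_mul_sum_add_comp_eq [NeZero q] (hDS : IsDS R ν q t M) (ht : 0 < t)
    (htν : t ≤ ν) {κ n : ℕ} (hκ : κ ≤ t) {ι : Fin κ → Fin n} (hι : Function.Injective ι)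
    {c : Fin n → Fin ν} (hc : Function.Injective fun s => c (ι s))
    {P : (Fin κ → Fin q) → ℝ} (hP : MemE q P) (x₀ : Fin n → Fin q) :
    (q : ℝ) ^ n * ∑ r, P (fun s => x₀ (ι s) + M r (c (ι s)))
      = R * ∑ x : Fin n → Fin q, P (fun s => x (ι s)) := by
  let u : Fin κ → Fin q := fun s => x₀ (ι s)
  have hrows := hDS.pow_mul_sum_comp_eq_of_le ht htν hκ hc (hP.comp_add_left u)
  have htranslate : ∑ y : Fin κ → Fin q, P (fun s => u s + y s) = ∑ y, P y :=
    Fintype.sum_equiv (Equiv.addLeft u) _ _ fun _ => rfl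
  have hmarginal := pow_card_nsmul_sum_comp_of_injective (γ := Fin q) hι P
  simp only [Fintype.card_fin, nsmul_eq_mul, Nat.cast_pow, Function.comp_def] at hmarginal
  have hq : (q : ℝ) ^ κ ≠ 0 := pow_ne_zero _ (Nat.cast_ne_zero.mpr (NeZero.ne q))
  apply mul_left_cancel₀ hq
  linear_combination (q : ℝ) ^ n * hrows + R * (q : ℝ) ^ n * htranslate - R * hmarginal

end DifferenceScheme

theorem card_mul_add_le_sum {ι : Type*} [Fintype ι] [DecidableEq ι] {s : Finset ι}
    {f : ι → ℝ} {A B : ℝ} (hA : ∀ i ∈ s, f i = A) (hB : ∀ i, B ≤ f i) :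
    #s * A + (Fintype.card ι - #s) * B ≤ ∑ i, f i := by
  rw [← sum_add_sum_compl s f, sum_congr rfl hA, sum_const, nsmul_eq_mul]
  have hcompl := card_nsmul_le_sum sᶜ f B fun i _ => hB i
  rw [card_compl, nsmul_eq_mul, Nat.cast_sub (card_le_univ s)] at hcompl
  linarith

namespace CSPInstance

variable {q k n : ℕ} (I : CSPInstance q k n)

theorem wor_le_value (x : Fin n → Fin q) : I.wor ≤ I.value x :=
  csInf_le (Set.finite_range _).bddBelow ⟨x, rfl⟩

theorem exists_value_eq_opt [NeZero q] : ∃ x, I.value x = I.opt :=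
  (Set.range_nonempty I.value).csSup_mem (Set.finite_range _)

theorem value_add_const (hE : ∀ i, MemE q (I.P i)) (x : Fin n → Fin q) (a : Fin q) :
    I.value (fun j => x j + a) = I.value x :=
  sum_congr rfl fun i _ => congrArg (I.w i * ·) (hE i _ a)

theorem sum_value_add_rows_eq [NeZero q] (hE : ∀ i, MemE q (I.P i)) {ν R : ℕ}
    {M : Fin R → Fin ν → Fin q} (hDS : IsDS R ν q k M) (hk : 0 < k) (hkν : k ≤ ν)
    {c : Fin n → Fin ν} (hc : ∀ i, Function.Injective fun s => c (I.idx i s))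
    (x₀ : Fin n → Fin q) :
    ∑ r, I.value (fun j => x₀ j + M r (c j)) = R * I.avg := by
  have hq : (q : ℝ) ^ n ≠ 0 := pow_ne_zero _ (Nat.cast_ne_zero.mpr (NeZero.ne q))
  rw [avg, mul_div_assoc', eq_div_iff hq, mul_comm]
  simp only [value, mul_sum, mul_left_comm _ (I.w _)]
  rw [sum_comm, sum_comm (s := univ (α := Fin n → Fin q))]
  refine sum_congr rfl fun i _ => ?_
  rw [← mul_sum, ← mul_sum, ← mul_sum, ← mul_sum, hDS.pow_mul_sum_add_comp_eq hk hkν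
    (I.arity_le i) (I.idx_mono i).injective (hc i) (hE i) x₀]

end CSPInstance

theorem avg_diff_ratio_of_DS_general
    (q k n ν R Rstar : ℕ) (hq : 2 ≤ q) (hk : 2 ≤ k) (hνk : k ≤ ν)
    (I : CSPInstance q k n)
    (hEq : ∀ i : Fin I.m, MemE q (I.P i))
    (hcol : I.StrongColoring ν)
    (M : Fin R → Fin ν → Fin q) (hDS : IsDS R ν q k M)
    (v : Fin ν → Fin q)
    (hv : (Finset.univ.filter fun r => ∃ a : Fin q, ∀ j, M r j = v j + a).card = Rstar)
    (hRs : 0 < Rstar) :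
    (Rstar : ℝ) / R * I.opt + (1 - (Rstar : ℝ) / R) * I.wor ≤ I.avg := by
  have : NeZero q := ⟨by omega⟩
  obtain ⟨c, hc⟩ := hcol
  obtain ⟨xopt, hxopt⟩ := I.exists_value_eq_opt
  have hrows := I.sum_value_add_rows_eq hEq hDS (by omega) hνk hc fun j => xopt j - v (c j)
  have hgood : ∀ r ∈ ({r | ∃ a : Fin q, ∀ j, M r j = v j + a} : Finset (Fin R)),
      I.value (fun j => xopt j - v (c j) + M r (c j)) = I.opt := by
    intro r hr
    obtain ⟨a, ha⟩ := (mem_filter.mp hr).2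
    have hshift : (fun j => xopt j - v (c j) + M r (c j)) = fun j => xopt j + a :=
      funext fun j => by rw [ha]; abel
    rw [hshift, I.value_add_const hEq, hxopt]
  have hbound := card_mul_add_le_sum hgood fun r => I.wor_le_value _
  rw [hv, hrows, Fintype.card_fin] at hbound
  have hR : (0 : ℝ) < R := by
    exact_mod_cast hRs.trans_le (hv ▸ (card_le_univ _).trans_eq (Fintype.card_fin R))
  calc (Rstar : ℝ) / R * I.opt + (1 - (Rstar : ℝ) / R) * I.wor
      = (Rstar * I.opt + (R - Rstar) * I.wor) / R := by field_simp
    _ ≤ R * I.avg / R := by gcongr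
    _ = I.avg := by field_simp

/-- Let `q ≥ 2`, `k ≥ 2`, and let `I` be a maximization instance of
`k CSP-q` with `opt(I) ≠ wor(I)` whose constraint functions all belong to `E_q`, and
which admits a strong coloring with `ν ≥ k` colors. If there is a difference scheme
`D_k(R, ν, q)` `M` and a word `v ∈ Σ_q^ν` such that the number of rows of `M` lying in
`{v + a·𝟏 : a ∈ Σ_q}` equals `R* > 0`, then
`E[v(I,X)] ≥ (R*/R)·opt(I) + (1 − R*/R)·wor(I)`. -/
theorem avg_diff_ratio_of_DS
    (q k n ν R Rstar : ℕ) (hq : 2 ≤ q) (hk : 2 ≤ k) (hνk : k ≤ ν)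
    (I : CSPInstance q k n) (hne : I.opt ≠ I.wor)
    (hEq : ∀ i : Fin I.m, MemE q (I.P i))
    (hcol : I.StrongColoring ν)
    (M : Fin R → Fin ν → Fin q) (hDS : IsDS R ν q k M)
    (v : Fin ν → Fin q)
    (hv : (Finset.univ.filter fun r => ∃ a : Fin q, ∀ j, M r j = v j + a).card = Rstar)
    (hRs : 0 < Rstar) :
    (Rstar : ℝ) / R * I.opt + (1 - (Rstar : ℝ) / R) * I.wor ≤ I.avg :=
  avg_diff_ratio_of_DS_general q k n ν R Rstar hq hk hνk I hEq hcol M hDS v hv hRs
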